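/- Let λ₁, λ₂ be positive integers. Set t₁ = (λ₁+λ₂+1)(3λ₁+2λ₂+4)/((λ₁+λ₂+2)(3λ₁+2λ₂+5)). Then the cubic polynomial y₂⁽⁴⁾(x) = x³ − [3(λ₁+λ₂+1)(3λ₁λ₂+2λ₂²−2λ₁+3λ₂−2)/(λ₂(λ₁+λ₂+2)(3λ₁+2λ₂+5))]x² + [3(λ₂−1)(λ₁+λ₂+1)²(3λ₁+2λ₂+4)(3λ₁λ₂+2λ₂²+2λ₁+6λ₂+4)/(λ₂(λ₂+1)(λ₁+λ₂+2)²(3λ₁+2λ₂+5)²)]x − (λ₂−1)(λ₁+λ₂+1)³(3λ₁+2λ₂+4)²/((λ₂+1)(λ₁+λ₂+2)³(3λ₁+2λ₂+5)²) satisfies the Bethe equation of color 1 at t₁, namely −3λ₁/t₁ − 3·(y₂⁽⁴⁾)′(t₁)/y₂⁽⁴⁾(t₁) = 0. -/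

import Mathlib

/-- The cubic polynomial `y₂⁽⁴⁾` (as a function of `x`), for a G₂-weight with
coordinates `(a, b)`. -/
noncomputable def g2y24 (a b : ℝ) : ℝ → ℝ := fun x =>
  x ^ 3
    - (3 * (a + b + 1) * (3 * a * b + 2 * b ^ 2 - 2 * a + 3 * b - 2) /
        (b * (a + b + 2) * (3 * a + 2 * b + 5))) * x ^ 2
    + (3 * (b - 1) * (a + b + 1) ^ 2 * (3 * a + 2 * b + 4) *
        (3 * a * b + 2 * b ^ 2 + 2 * a + 6 * b + 4) /
        (b * (b + 1) * (a + b + 2) ^ 2 * (3 * a + 2 * b + 5) ^ 2)) * x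
    - (b - 1) * (a + b + 1) ^ 3 * (3 * a + 2 * b + 4) ^ 2 /
        ((b + 1) * (a + b + 2) ^ 3 * (3 * a + 2 * b + 5) ^ 2)

/-- The first Bethe root `t₁` for `l = (1,3)`. -/
noncomputable def g2t14 (a b : ℝ) : ℝ :=
  (a + b + 1) * (3 * a + 2 * b + 4) / ((a + b + 2) * (3 * a + 2 * b + 5))

private lemma cubic_hasDerivAt (A B C x : ℝ) :
    HasDerivAt (fun x : ℝ => x ^ 3 - A * x ^ 2 + B * x - C)
      (3 * x ^ 2 - A * (2 * x) + B) x := by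
  have h1 := hasDerivAt_pow 3 x
  have h2 := (hasDerivAt_pow 2 x).const_mul A
  have h3 := (hasDerivAt_id x).const_mul B
  have h := ((h1.sub h2).add h3).sub_const C
  refine h.congr_deriv ?_
  push_cast
  ring

private lemma g2_deriv (a b : ℝ) (x : ℝ) :
    deriv (g2y24 a b) x =
      3 * x ^ 2
        - (3 * (a + b + 1) * (3 * a * b + 2 * b ^ 2 - 2 * a + 3 * b - 2) /
            (b * (a + b + 2) * (3 * a + 2 * b + 5))) * (2 * x)
        + 3 * (b - 1) * (a + b + 1) ^ 2 * (3 * a + 2 * b + 4) *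
            (3 * a * b + 2 * b ^ 2 + 2 * a + 6 * b + 4) /
            (b * (b + 1) * (a + b + 2) ^ 2 * (3 * a + 2 * b + 5) ^ 2) := by
  exact (cubic_hasDerivAt _ _ _ x).deriv

/-- For positive integers `λ₁, λ₂`, the data `(t₁; roots of y₂⁽⁴⁾)` satisfies the
color-1 Bethe ansatz equation `−3λ₁/t₁ − 3·(y₂⁽⁴⁾)′(t₁)/y₂⁽⁴⁾(t₁) = 0` for the
G₂ Gaudin model with `Λ = ((λ₁,λ₂), ω₂)`, `z = (0,1)`, `l = (1,3)`. -/
theorem g2_bae_l13_color1 (l1 l2 : ℕ) (h1 : 0 < l1) (h2 : 0 < l2) :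
    -(3 * (l1 : ℝ)) / g2t14 l1 l2 -
        3 * deriv (g2y24 l1 l2) (g2t14 l1 l2) / g2y24 l1 l2 (g2t14 l1 l2) = 0 := by
  set a : ℝ := (l1 : ℝ) with ha'
  set b : ℝ := (l2 : ℝ) with hb'
  have ha : (1 : ℝ) ≤ a := by rw [ha']; exact_mod_cast h1
  have hb : (1 : ℝ) ≤ b := by rw [hb']; exact_mod_cast h2
  have hb0 : b ≠ 0 := by nlinarith
  have hb1 : b + 1 ≠ 0 := by nlinarith
  have hab1 : a + b + 1 ≠ 0 := by nlinarith
  have hab2 : a + b + 2 ≠ 0 := by nlinarith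
  have h34 : 3 * a + 2 * b + 4 ≠ 0 := by nlinarith
  have h35 : 3 * a + 2 * b + 5 ≠ 0 := by nlinarith
  have ha0 : a ≠ 0 := by nlinarith
  have ht : g2t14 a b ≠ 0 := by
    unfold g2t14
    exact div_ne_zero (mul_ne_zero hab1 h34) (mul_ne_zero hab2 h35)
  have hy : g2y24 a b (g2t14 a b) =
      -6 * (a + b + 1) ^ 3 * (3 * a + 2 * b + 4) ^ 2 /
        (b * (b + 1) * (a + b + 2) ^ 3 * (3 * a + 2 * b + 5) ^ 3) := by
    unfold g2y24 g2t14
    field_simp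
    ring
  have hy' : deriv (g2y24 a b) (g2t14 a b) =
      6 * a * (a + b + 1) ^ 2 * (3 * a + 2 * b + 4) /
        (b * (b + 1) * (a + b + 2) ^ 2 * (3 * a + 2 * b + 5) ^ 2) := by
    rw [g2_deriv]
    unfold g2t14
    field_simp
    ring
  rw [hy, hy']
  unfold g2t14
  have hden : -6 * (a + b + 1) ^ 3 * (3 * a + 2 * b + 4) ^ 2 /
      (b * (b + 1) * (a + b + 2) ^ 3 * (3 * a + 2 * b + 5) ^ 3) ≠ 0 := by
    apply div_ne_zero
    · exact mul_ne_zero (mul_ne_zero (by norm_num) (pow_ne_zero _ hab1)) (pow_ne_zero _ h34)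
    · exact mul_ne_zero (mul_ne_zero (mul_ne_zero hb0 hb1) (pow_ne_zero _ hab2))
        (pow_ne_zero _ h35)
  field_simp
  ring
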